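/- Let H be a Hopf algebra with bijective antipode S and J a normalized twist for H. Define Δᴶ(a) = J⁻¹·Δ(a)·J and Sᴶ(a) = Q_J⁻¹·S(a)·Q_J for a ∈ H, where Q_J = Σ S(J⁽¹⁾)·J⁽²⁾. Then (H, same multiplication, Δᴶ, same counit ε, antipode Sᴶ) is a Hopf algebra. -/

import Mathlib

open TensorProduct

noncomputable section
variable (K B : Type*) [Field K] [Ring B] [Bialgebra K B]

/-- `ε ⊗ id : B ⊗ B → B`. -/
def epsId : B ⊗[K] B →ₐ[K] B :=
  (Algebra.TensorProduct.lid K B).toAlgHom.comp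
    (Algebra.TensorProduct.map (Bialgebra.counitAlgHom K B) (AlgHom.id K B))

/-- `id ⊗ ε : B ⊗ B → B`. -/
def idEps : B ⊗[K] B →ₐ[K] B :=
  (Algebra.TensorProduct.rid K K B).toAlgHom.comp
    (Algebra.TensorProduct.map (AlgHom.id K B) (Bialgebra.counitAlgHom K B))

/-- `Δ ⊗ id`, landing in `B ⊗ (B ⊗ B)`. -/
def comulId : B ⊗[K] B →ₐ[K] B ⊗[K] (B ⊗[K] B) :=
  (Algebra.TensorProduct.assoc K K K B B B).toAlgHom.comp
    (Algebra.TensorProduct.map (Bialgebra.comulAlgHom K B) (AlgHom.id K B))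

/-- `id ⊗ Δ`, landing in `B ⊗ (B ⊗ B)`. -/
def idComul : B ⊗[K] B →ₐ[K] B ⊗[K] (B ⊗[K] B) :=
  Algebra.TensorProduct.map (AlgHom.id K B) (Bialgebra.comulAlgHom K B)

/-- The cocycle condition `(Δ ⊗ id)(J)·(J ⊗ 1) = (id ⊗ Δ)(J)·(1 ⊗ J)` for a twist. -/
def IsTwist (J : B ⊗[K] B) : Prop :=
  comulId K B J * (Algebra.TensorProduct.assoc K K K B B B (J ⊗ₜ 1)) =
    idComul K B J * ((1 : B) ⊗ₜ J)

/-- Normalization `(ε ⊗ id)(J) = (id ⊗ ε)(J) = 1`. -/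
def IsNormalized (J : B ⊗[K] B) : Prop :=
  epsId K B J = 1 ∧ idEps K B J = 1

/-- The twisted comultiplication `a ↦ J⁻¹·Δ(a)·J` (with `J'` playing the role of `J⁻¹`). -/
def comulJ (J' J : B ⊗[K] B) : B →ₗ[K] B ⊗[K] B :=
  LinearMap.mulLeft K J' ∘ₗ LinearMap.mulRight K J ∘ₗ Coalgebra.comul

end

noncomputable section
variable (K B : Type*) [Field K] [Ring B] [HopfAlgebra K B]

/-- The antipode as a linear map. -/
def anti : B →ₗ[K] B := HopfAlgebra.antipode (R := K) (A := B)

/-- `Q_J = Σ S(J⁽¹⁾)·J⁽²⁾`. -/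
def QJ (J : B ⊗[K] B) : B := LinearMap.mul' K B ((anti K B).rTensor B J)

/-- `Σ J'⁽¹⁾·S(J'⁽²⁾)`; for `J' = J⁻¹` this is the inverse of `Q_J`. -/
def QJinv (J' : B ⊗[K] B) : B := LinearMap.mul' K B ((anti K B).lTensor B J')

/-- The twisted antipode `a ↦ Q_J⁻¹·S(a)·Q_J` (with `J'` playing the role of `J⁻¹`). -/
def antiJ (J' J : B ⊗[K] B) : B →ₗ[K] B :=
  LinearMap.mulLeft K (QJinv K B J') ∘ₗ LinearMap.mulRight K (QJ K B J) ∘ₗ anti K B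

end

/-!
`Δᴶ` is conjugation of the algebra map `Δ` by the unit `J`, so it is again an algebra map, and
normalization of `J` gives the counit laws. Both sides of coassociativity are conjugates of
`(Δ ⊗ id)Δ = (id ⊗ Δ)Δ`, by `(J⁻¹ ⊗ 1)(Δ ⊗ id)(J⁻¹)` and `(Δ ⊗ id)(J)(J ⊗ 1)` on the left and by
`(1 ⊗ J⁻¹)(id ⊗ Δ)(J⁻¹)` and `(id ⊗ Δ)(J)(1 ⊗ J)` on the right; these agree by the cocycle identity
for `J` and its inverse.

For the antipode, the only point is that `Σ J⁻⁽¹⁾ S(J⁻⁽²⁾)` is a left inverse of `Q_J`. The map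
`x ⊗ y ⊗ z ↦ x S(y) z` sends `(1 ⊗ J)(J⁻¹ ⊗ 1)` to `Q_J⁻¹ Q_J`; by the cocycle identity this
element is also `(id ⊗ Δ)(J⁻¹)(Δ ⊗ id)(J)`, which the same map sends to
`(id ⊗ ε)(J⁻¹)(ε ⊗ id)(J) = 1`. The antipode laws for `Sᴶ` then follow from those for `S`.
-/

open Coalgebra

section

variable {K H : Type*} [Field K] [Ring H]

local notation "α" => Algebra.TensorProduct.assoc K K K H H H

section Bialgebra

variable [Bialgebra K H] {J J' : H ⊗[K] H}

lemma comulJ_apply (J' J : H ⊗[K] H) (a : H) : comulJ K H J' J a = J' * (comul a * J) := rfl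

lemma comulJ_mul (hJ : J * J' = 1) (a b : H) :
    comulJ K H J' J (a * b) = comulJ K H J' J a * comulJ K H J' J b := by
  simp only [comulJ_apply, Bialgebra.comul_mul, mul_assoc]
  rw [← mul_assoc J, hJ, one_mul]

lemma comulJ_one (hJ' : J' * J = 1) : comulJ K H J' J 1 = 1 := by
  rw [comulJ_apply, Bialgebra.comul_one, one_mul, hJ']

lemma epsId_comul (a : H) : epsId K H (comul a) = a := by
  change TensorProduct.lid K H (counit.rTensor H (comul a)) = a
  rw [rTensor_counit_comul, TensorProduct.lid_tmul, one_smul]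

lemma idEps_comul (a : H) : idEps K H (comul a) = a := by
  change TensorProduct.rid K H (counit.lTensor H (comul a)) = a
  rw [lTensor_counit_comul, TensorProduct.rid_tmul, one_smul]

lemma IsNormalized.of_mul_eq_one (hn : IsNormalized K H J) (hJ' : J' * J = 1) :
    IsNormalized K H J' :=
  ⟨by simpa [hn.1] using congr(epsId K H $hJ'), by simpa [hn.2] using congr(idEps K H $hJ')⟩

lemma epsId_comulJ (hn : IsNormalized K H J) (hJ' : J' * J = 1) (a : H) :
    epsId K H (comulJ K H J' J a) = a := by
  rw [comulJ_apply, map_mul, map_mul, (hn.of_mul_eq_one hJ').1, hn.1, epsId_comul, one_mul,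
    mul_one]

lemma idEps_comulJ (hn : IsNormalized K H J) (hJ' : J' * J = 1) (a : H) :
    idEps K H (comulJ K H J' J a) = a := by
  rw [comulJ_apply, map_mul, map_mul, (hn.of_mul_eq_one hJ').2, hn.2, idEps_comul, one_mul,
    mul_one]

lemma comulId_comul (a : H) : comulId K H (comul a) = idComul K H (comul a) :=
  coassoc_apply a

lemma assoc_rTensor_comulJ (x : H ⊗[K] H) :
    α ((comulJ K H J' J).rTensor H x) = α (J' ⊗ₜ 1) * comulId K H x * α (J ⊗ₜ 1) := by
  induction x using TensorProduct.induction_on with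
  | zero => simp
  | tmul u v =>
    change _ = _ * α (comul u ⊗ₜ v) * _
    rw [← map_mul, ← map_mul, Algebra.TensorProduct.tmul_mul_tmul,
      Algebra.TensorProduct.tmul_mul_tmul, one_mul, mul_one, LinearMap.rTensor_tmul, comulJ_apply,
      mul_assoc]
  | add x y hx hy => simp only [map_add, hx, hy, mul_add, add_mul]

lemma lTensor_comulJ (x : H ⊗[K] H) :
    (comulJ K H J' J).lTensor H x = ((1 : H) ⊗ₜ J') * idComul K H x * ((1 : H) ⊗ₜ J) := by
  induction x using TensorProduct.induction_on with
  | zero => simp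
  | tmul u v =>
    change _ = _ * (u ⊗ₜ comul v) * _
    rw [Algebra.TensorProduct.tmul_mul_tmul, Algebra.TensorProduct.tmul_mul_tmul, one_mul,
      mul_one, LinearMap.lTensor_tmul, comulJ_apply, mul_assoc]
  | add x y hx hy => simp only [map_add, hx, hy, mul_add, add_mul]

lemma IsTwist.inv (hc : IsTwist K H J) (hJ : J * J' = 1) (hJ' : J' * J = 1) :
    α (J' ⊗ₜ 1) * comulId K H J' = ((1 : H) ⊗ₜ J') * idComul K H J' := by
  refine left_inv_eq_right_inv (a := comulId K H J * α (J ⊗ₜ 1)) ?_ ?_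
  · rw [mul_assoc, ← mul_assoc (comulId K H J'), ← map_mul, hJ', map_one, one_mul, ← map_mul,
      Algebra.TensorProduct.tmul_mul_tmul, hJ', mul_one, ← Algebra.TensorProduct.one_def, map_one]
  · rw [hc, mul_assoc, ← mul_assoc (1 ⊗ₜ J), Algebra.TensorProduct.tmul_mul_tmul, hJ, mul_one,
      ← Algebra.TensorProduct.one_def, one_mul, ← map_mul, hJ, map_one]

lemma coassoc_comulJ (hc : IsTwist K H J) (hJ : J * J' = 1) (hJ' : J' * J = 1) (a : H) :
    α ((comulJ K H J' J).rTensor H (comulJ K H J' J a)) =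
      (comulJ K H J' J).lTensor H (comulJ K H J' J a) := by
  rw [assoc_rTensor_comulJ, lTensor_comulJ, comulJ_apply, map_mul, map_mul, map_mul, map_mul]
  calc _ = α (J' ⊗ₜ 1) * comulId K H J' * comulId K H (comul a) *
        (comulId K H J * α (J ⊗ₜ 1)) := by simp only [mul_assoc]
    _ = ((1 : H) ⊗ₜ J') * idComul K H J' * idComul K H (comul a) *
        (idComul K H J * ((1 : H) ⊗ₜ J)) := by rw [hc.inv hJ hJ', comulId_comul, hc]
    _ = _ := by simp only [mul_assoc]

end Bialgebra

section HopfAlgebra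

variable [HopfAlgebra K H] {J J' : H ⊗[K] H}

variable (K H) in
def QJₗ : H ⊗[K] H →ₗ[K] H := LinearMap.mul' K H ∘ₗ (anti K H).rTensor H

variable (K H) in
def QJinvₗ : H ⊗[K] H →ₗ[K] H := LinearMap.mul' K H ∘ₗ (anti K H).lTensor H

@[simp] lemma QJₗ_tmul (u v : H) : QJₗ K H (u ⊗ₜ v) = anti K H u * v := rfl

@[simp] lemma QJinvₗ_tmul (u v : H) : QJinvₗ K H (u ⊗ₜ v) = u * anti K H v := rfl

lemma anti_mul (a b : H) : anti K H (a * b) = anti K H b * anti K H a :=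
  HopfAlgebra.antipode_mul_antidistrib a b

lemma QJₗ_comul (a : H) : QJₗ K H (comul a) = algebraMap K H (counit a) :=
  HopfAlgebra.mul_antipode_rTensor_comul_apply a

lemma QJinvₗ_comul (a : H) : QJinvₗ K H (comul a) = algebraMap K H (counit a) :=
  HopfAlgebra.mul_antipode_lTensor_comul_apply a

lemma QJₗ_mul_tmul (z : H ⊗[K] H) (u v : H) :
    QJₗ K H (z * (u ⊗ₜ v)) = anti K H u * QJₗ K H z * v := by
  induction z using TensorProduct.induction_on with
  | zero => simp
  | tmul x y => simp [Algebra.TensorProduct.tmul_mul_tmul, anti_mul, mul_assoc]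
  | add x y hx hy => simp only [add_mul, map_add, hx, hy, mul_add]

lemma QJinvₗ_tmul_mul (z : H ⊗[K] H) (u v : H) :
    QJinvₗ K H ((u ⊗ₜ v) * z) = u * QJinvₗ K H z * anti K H v := by
  induction z using TensorProduct.induction_on with
  | zero => simp
  | tmul x y => simp [Algebra.TensorProduct.tmul_mul_tmul, anti_mul, mul_assoc]
  | add x y hx hy => simp only [mul_add, map_add, hx, hy, add_mul]

lemma QJₗ_comul_mul (a : H) (x : H ⊗[K] H) :
    QJₗ K H (comul a * x) = counit (R := K) a • QJₗ K H x := by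
  induction x using TensorProduct.induction_on with
  | zero => simp
  | tmul u v =>
    rw [QJₗ_mul_tmul, QJₗ_comul, ← Algebra.commutes, mul_assoc, ← Algebra.smul_def]
    rfl
  | add x y hx hy => simp only [mul_add, map_add, hx, hy, smul_add]

lemma QJinvₗ_mul_comul (a : H) (x : H ⊗[K] H) :
    QJinvₗ K H (x * comul a) = counit (R := K) a • QJinvₗ K H x := by
  induction x using TensorProduct.induction_on with
  | zero => simp
  | tmul u v =>
    rw [QJinvₗ_tmul_mul, QJinvₗ_comul, ← Algebra.commutes, mul_assoc, ← Algebra.smul_def]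
    rfl
  | add x y hx hy => simp only [add_mul, map_add, hx, hy, smul_add]

variable (K H) in
def mulAntipodeMid : H ⊗[K] (H ⊗[K] H) →ₗ[K] H := LinearMap.mul' K H ∘ₗ (QJₗ K H).lTensor H

lemma mulAntipodeMid_tmul_mul_assoc (c b : H) (z w : H ⊗[K] H) :
    mulAntipodeMid K H ((c ⊗ₜ z) * α (w ⊗ₜ b)) = c * QJinvₗ K H w * (QJₗ K H z * b) := by
  induction w using TensorProduct.induction_on with
  | zero => simp
  | tmul x y =>
    induction z using TensorProduct.induction_on with
    | zero => simp
    | tmul u v => simp [mulAntipodeMid, Algebra.TensorProduct.tmul_mul_tmul, anti_mul, mul_assoc]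
    | add p q hp hq => simp only [tmul_add, add_mul, map_add, hp, hq, mul_add]
  | add p q hp hq => simp only [add_tmul, map_add, mul_add, hp, hq, add_mul]

lemma mulAntipodeMid_idComul_mul_comulId (z w : H ⊗[K] H) :
    mulAntipodeMid K H (idComul K H z * comulId K H w) = idEps K H z * epsId K H w := by
  induction z using TensorProduct.induction_on with
  | zero => simp
  | tmul c d =>
    induction w using TensorProduct.induction_on with
    | zero => simp
    | tmul a b =>
      change mulAntipodeMid K H ((c ⊗ₜ comul d) * α (comul a ⊗ₜ b)) =
        counit (R := K) d • c * counit (R := K) a • b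
      rw [mulAntipodeMid_tmul_mul_assoc, QJinvₗ_comul, QJₗ_comul, Algebra.algebraMap_eq_smul_one,
        Algebra.algebraMap_eq_smul_one]
      simp only [mul_smul_comm, smul_mul_assoc, mul_one, one_mul, smul_smul, mul_comm]
    | add p q hp hq => simp only [map_add, mul_add, hp, hq]
  | add p q hp hq => simp only [map_add, add_mul, hp, hq]

lemma QJinvₗ_mul_QJₗ (hc : IsTwist K H J) (hn : IsNormalized K H J) (hJ : J * J' = 1)
    (hJ' : J' * J = 1) : QJinvₗ K H J' * QJₗ K H J = 1 := by
  have hcocycle : ((1 : H) ⊗ₜ J) * α (J' ⊗ₜ 1) = idComul K H J' * comulId K H J := by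
    calc _ = idComul K H J' * (idComul K H J * ((1 : H) ⊗ₜ J)) * α (J' ⊗ₜ 1) := by
          rw [← mul_assoc, ← map_mul, hJ', map_one, one_mul]
      _ = idComul K H J' * (comulId K H J * α (J ⊗ₜ 1)) * α (J' ⊗ₜ 1) := by rw [hc]
      _ = _ := by
          rw [mul_assoc, mul_assoc, ← map_mul α, Algebra.TensorProduct.tmul_mul_tmul, hJ, mul_one,
            ← Algebra.TensorProduct.one_def, map_one, mul_one]
  calc QJinvₗ K H J' * QJₗ K H J = mulAntipodeMid K H (((1 : H) ⊗ₜ J) * α (J' ⊗ₜ 1)) := by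
        rw [mulAntipodeMid_tmul_mul_assoc, one_mul, mul_one]
    _ = idEps K H J' * epsId K H J := by rw [hcocycle, mulAntipodeMid_idComul_mul_comulId]
    _ = 1 := by rw [(hn.of_mul_eq_one hJ').2, hn.1, one_mul]

lemma mul'_rTensor_antiJ (u : H ⊗[K] H) :
    LinearMap.mul' K H ((antiJ K H J' J).rTensor H u) = QJinvₗ K H J' * QJₗ K H (J * u) := by
  induction u using TensorProduct.induction_on with
  | zero => simp
  | tmul x y =>
    rw [QJₗ_mul_tmul, ← mul_assoc]
    rfl
  | add p q hp hq => simp only [map_add, mul_add, hp, hq]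

lemma mul'_lTensor_antiJ (u : H ⊗[K] H) :
    LinearMap.mul' K H ((antiJ K H J' J).lTensor H u) = QJinvₗ K H (u * J') * QJₗ K H J := by
  induction u using TensorProduct.induction_on with
  | zero => simp
  | tmul x y =>
    rw [QJinvₗ_tmul_mul, mul_assoc, mul_assoc]
    rfl
  | add p q hp hq => simp only [map_add, add_mul, hp, hq]

lemma mul'_rTensor_antiJ_comulJ (hc : IsTwist K H J) (hn : IsNormalized K H J) (hJ : J * J' = 1)
    (hJ' : J' * J = 1) (a : H) :
    LinearMap.mul' K H ((antiJ K H J' J).rTensor H (comulJ K H J' J a)) =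
      algebraMap K H (counit (R := K) a) := by
  rw [mul'_rTensor_antiJ, comulJ_apply, ← mul_assoc, hJ, one_mul, QJₗ_comul_mul, mul_smul_comm,
    QJinvₗ_mul_QJₗ hc hn hJ hJ', Algebra.algebraMap_eq_smul_one]

lemma mul'_lTensor_antiJ_comulJ (hc : IsTwist K H J) (hn : IsNormalized K H J) (hJ : J * J' = 1)
    (hJ' : J' * J = 1) (a : H) :
    LinearMap.mul' K H ((antiJ K H J' J).lTensor H (comulJ K H J' J a)) =
      algebraMap K H (counit (R := K) a) := by
  rw [mul'_lTensor_antiJ, comulJ_apply, mul_assoc, mul_assoc, hJ, mul_one, QJinvₗ_mul_comul,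
    smul_mul_assoc, QJinvₗ_mul_QJₗ hc hn hJ hJ', Algebra.algebraMap_eq_smul_one]

end HopfAlgebra

end

variable {K H : Type*} [Field K] [Ring H] [HopfAlgebra K H]

theorem twisted_hopf_algebra_general
    (J J' : H ⊗[K] H)
    (hJ : J * J' = 1) (hJ' : J' * J = 1) (hc : IsTwist K H J) (hn : IsNormalized K H J) :
    -- `Δᴶ` is a unital algebra homomorphism
    ((∀ a b : H, comulJ K H J' J (a * b) = comulJ K H J' J a * comulJ K H J' J b) ∧
      comulJ K H J' J 1 = 1) ∧
    -- coassociativity of `Δᴶ`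
    (∀ a : H, Algebra.TensorProduct.assoc K K K H H H
        ((comulJ K H J' J).rTensor H (comulJ K H J' J a)) =
      (comulJ K H J' J).lTensor H (comulJ K H J' J a)) ∧
    -- the counit laws for `ε` with respect to `Δᴶ`
    (∀ a : H, epsId K H (comulJ K H J' J a) = a ∧ idEps K H (comulJ K H J' J a) = a) ∧
    -- the antipode laws for `Sᴶ`
    (∀ a : H,
      LinearMap.mul' K H ((antiJ K H J' J).rTensor H (comulJ K H J' J a)) =
        algebraMap K H (Bialgebra.counitAlgHom K H a) ∧
      LinearMap.mul' K H ((antiJ K H J' J).lTensor H (comulJ K H J' J a)) =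
        algebraMap K H (Bialgebra.counitAlgHom K H a)) :=
  ⟨⟨comulJ_mul hJ, comulJ_one hJ'⟩, coassoc_comulJ hc hJ hJ',
    fun a => ⟨epsId_comulJ hn hJ' a, idEps_comulJ hn hJ' a⟩,
    fun a => ⟨mul'_rTensor_antiJ_comulJ hc hn hJ hJ' a, mul'_lTensor_antiJ_comulJ hc hn hJ hJ' a⟩⟩

theorem twisted_hopf_algebra (hS : Function.Bijective (anti K H))
    (J J' : H ⊗[K] H)
    (hJ : J * J' = 1) (hJ' : J' * J = 1) (hc : IsTwist K H J) (hn : IsNormalized K H J) :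
    -- `Δᴶ` is a unital algebra homomorphism
    ((∀ a b : H, comulJ K H J' J (a * b) = comulJ K H J' J a * comulJ K H J' J b) ∧
      comulJ K H J' J 1 = 1) ∧
    -- coassociativity of `Δᴶ`
    (∀ a : H, Algebra.TensorProduct.assoc K K K H H H
        ((comulJ K H J' J).rTensor H (comulJ K H J' J a)) =
      (comulJ K H J' J).lTensor H (comulJ K H J' J a)) ∧
    -- the counit laws for `ε` with respect to `Δᴶ`
    (∀ a : H, epsId K H (comulJ K H J' J a) = a ∧ idEps K H (comulJ K H J' J a) = a) ∧
    -- the antipode laws for `Sᴶ`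
    (∀ a : H,
      LinearMap.mul' K H ((antiJ K H J' J).rTensor H (comulJ K H J' J a)) =
        algebraMap K H (Bialgebra.counitAlgHom K H a) ∧
      LinearMap.mul' K H ((antiJ K H J' J).lTensor H (comulJ K H J' J a)) =
        algebraMap K H (Bialgebra.counitAlgHom K H a)) :=
  twisted_hopf_algebra_general J J' hJ hJ' hc hn
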